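/- Let α ∈ (0,1), and suppose positive reals satisfy: for an index set W with distinguished element ℓ, payments p_i ≤ (B/(1-α))·(V_i / D_i) where V_ℓ = A + M with A ≥ 0, and all denominators satisfy D_i > ((1-α)/α)·(Σ_{i∈W} V_i - M). Then Σ_{i∈W} p_i < (B/(1-α))·(α/(1-α) + M/D_ℓ). -/

import Mathlib

open Finset

section

variable {ι K : Type*} [Field K] [LinearOrder K] [IsStrictOrderedRing K] {s : Finset ι} {f g : ι → K}

theorem Finset.sum_div_le_sum_div_of_le {d : K} (hf : ∀ i ∈ s, 0 ≤ f i) (hd : 0 < d)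
    (hg : ∀ i ∈ s, d ≤ g i) : ∑ i ∈ s, f i / g i ≤ (∑ i ∈ s, f i) / d := by
  rw [sum_div]
  exact sum_le_sum fun i hi => div_le_div_of_nonneg_left (hf i hi) hd (hg i hi)

/-- Compare every term with the smallest denominator. -/
theorem Finset.sum_div_lt_inv_of_mul_sum_lt {c : K} (hs : s.Nonempty) (hc : 0 < c)
    (hf : ∀ i ∈ s, 0 ≤ f i) (hg : ∀ i ∈ s, c * ∑ j ∈ s, f j < g i) :
    ∑ i ∈ s, f i / g i < c⁻¹ := by
  obtain ⟨j, hj, hmin⟩ := s.exists_min_image g hs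
  have hgj : 0 < g j := (mul_nonneg hc.le (sum_nonneg hf)).trans_lt (hg j hj)
  calc ∑ i ∈ s, f i / g i ≤ (∑ i ∈ s, f i) / g j := sum_div_le_sum_div_of_le hf hgj hmin
    _ < c⁻¹ := (div_lt_iff₀ hgj).2 ((lt_inv_mul_iff₀ hc).2 (hg j hj))

end

theorem key_payment_bound_general {ι : Type*} [DecidableEq ι]
    (W : Finset ι) (ℓ : ι) (hℓ : ℓ ∈ W)
    (p V D : ι → ℝ) (B α A M : ℝ)
    (hB : 0 < B) (hα0 : 0 < α) (hα1 : α < 1)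
    (hA : 0 ≤ A)
    (hVℓ : V ℓ = A + M)
    (hV : ∀ i ∈ W, 0 ≤ V i)
    (hp : ∀ i ∈ W, p i ≤ B / (1 - α) * (V i / D i))
    (hD : ∀ i ∈ W, D i > (1 - α) / α * ((∑ i ∈ W, V i) - M)) :
    ∑ i ∈ W, p i < B / (1 - α) * (α / (1 - α) + M / D ℓ) := by
  set U : ι → ℝ := fun i => V i - if i = ℓ then M else 0
  have hU : ∀ i ∈ W, 0 ≤ U i := by
    intro i hi
    by_cases h : i = ℓ
    · simp [U, h, hVℓ, hA]
    · simp [U, h, hV i hi]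
  have hsumU : ∑ i ∈ W, U i = (∑ i ∈ W, V i) - M := by simp [U, sum_sub_distrib, hℓ]
  have hsplit : ∑ i ∈ W, V i / D i = M / D ℓ + ∑ i ∈ W, U i / D i := by
    simp [U, sub_div, sum_sub_distrib, ite_div, hℓ]
  have hUD : ∑ i ∈ W, U i / D i < α / (1 - α) := by
    rw [← inv_div]
    refine sum_div_lt_inv_of_mul_sum_lt ⟨ℓ, hℓ⟩ (div_pos (by linarith) hα0) hU fun i hi => ?_
    rw [hsumU]
    exact hD i hi
  calc ∑ i ∈ W, p i ≤ ∑ i ∈ W, B / (1 - α) * (V i / D i) := sum_le_sum hp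
    _ = B / (1 - α) * (M / D ℓ + ∑ i ∈ W, U i / D i) := by rw [← mul_sum, hsplit]
    _ < B / (1 - α) * (α / (1 - α) + M / D ℓ) :=
      mul_lt_mul_of_pos_left (by linarith) (div_pos hB (by linarith))

theorem key_payment_bound {ι : Type*} [DecidableEq ι]
    (W : Finset ι) (ℓ : ι) (hℓ : ℓ ∈ W)
    (p V D : ι → ℝ) (B α A M : ℝ)
    (hB : 0 < B) (hα0 : 0 < α) (hα1 : α < 1)
    (hA : 0 ≤ A) (hM : 0 ≤ M)
    (hVℓ : V ℓ = A + M)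
    (hV : ∀ i ∈ W, 0 ≤ V i)
    (hp : ∀ i ∈ W, p i ≤ B / (1 - α) * (V i / D i))
    (hD : ∀ i ∈ W, D i > (1 - α) / α * ((∑ i ∈ W, V i) - M)) :
    ∑ i ∈ W, p i < B / (1 - α) * (α / (1 - α) + M / D ℓ) :=
  key_payment_bound_general W ℓ hℓ p V D B α A M hB hα0 hα1 hA hVℓ hV hp hD
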